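/- arXiv:1708.03828 — 2 statements merged into one kernel-verified Lean document; each statement's English description precedes it below -/
import Mathlib

section
/- Let X be an n×n symmetric positive definite matrix with Cholesky-type factorizations X = Rᵀ R, and let Y = Hᵀ H be symmetric positive definite, with singular value decomposition H Rᵀ = U Σ Vᵀ (U, V orthogonal, Σ diagonal positive definite). Define T = Σ^{−1/2} Uᵀ H. Then T is invertible with T⁻¹ = Rᵀ V Σ^{−1/2}, and T X Tᵀ = T⁻ᵀ Y T⁻¹ = Σ. -/
open Matrix

/-! Substituting `H Rᵀ = U Σ Vᵀ` and cancelling `Uᵀ U = Vᵀ V = 1` reduces `T T⁻¹` to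
`Σ^{-1/2} Σ Σ^{-1/2}` and both transformed gramians to `Σ^{-1/2} Σ² Σ^{-1/2}` (using that `Σ` and
`Σ^{-1/2}` are symmetric). A square root of `Σ⁻¹` commutes with `Σ`, so these are `1` and `Σ`. -/

namespace Matrix

variable {n K : Type*} [Fintype n] [DecidableEq n] [CommRing K]

theorem commute_of_mul_self_eq_inv {S Sh : Matrix n n K} (hS : IsUnit S.det)
    (hSh : Sh * Sh = S⁻¹) : Commute Sh S := by
  have hleft : (S * Sh) * Sh = 1 := by rw [Matrix.mul_assoc, hSh, mul_nonsing_inv S hS]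
  have hright : Sh * (Sh * S) = 1 := by rw [← Matrix.mul_assoc, hSh, nonsing_inv_mul S hS]
  exact (inv_eq_right_inv hright).symm.trans (inv_eq_left_inv hleft)

theorem mul_mul_eq_one_of_mul_self_eq_inv {S Sh : Matrix n n K} (hS : IsUnit S.det)
    (hSh : Sh * Sh = S⁻¹) : Sh * S * Sh = 1 := by
  rw [Matrix.mul_assoc, ← (commute_of_mul_self_eq_inv hS hSh).eq, ← Matrix.mul_assoc, hSh,
    nonsing_inv_mul S hS]

theorem mul_mul_mul_eq_of_mul_self_eq_inv {S Sh : Matrix n n K} (hS : IsUnit S.det)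
    (hSh : Sh * Sh = S⁻¹) : Sh * (S * S) * Sh = S := by
  calc Sh * (S * S) * Sh = S * Sh * S * Sh := by
        rw [← Matrix.mul_assoc, (commute_of_mul_self_eq_inv hS hSh).eq]
    _ = S * (Sh * S * Sh) := by simp only [Matrix.mul_assoc]
    _ = S := by rw [mul_mul_eq_one_of_mul_self_eq_inv hS hSh, Matrix.mul_one]

section SVD

variable {H R U V S : Matrix n n K}

theorem transpose_mul_svd_mul_eq (hU : Uᵀ * U = 1) (hV : Vᵀ * V = 1) :
    Uᵀ * (U * S * Vᵀ) * V = S := by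
  simp only [Matrix.mul_assoc, hV, Matrix.mul_one]
  rw [← Matrix.mul_assoc, hU, Matrix.one_mul]

theorem mul_mul_transpose_of_svd (hSVD : H * Rᵀ = U * S * Vᵀ) (hU : Uᵀ * U = 1)
    (hV : Vᵀ * V = 1) : Uᵀ * (H * Rᵀ) * (H * Rᵀ)ᵀ * U = S * Sᵀ := by
  rw [hSVD]
  simp only [transpose_mul, transpose_transpose, Matrix.mul_assoc]
  rw [← Matrix.mul_assoc Vᵀ V, hV, Matrix.one_mul, hU, Matrix.mul_one, ← Matrix.mul_assoc, hU,
    Matrix.one_mul]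

theorem transpose_mul_mul_of_svd (hSVD : H * Rᵀ = U * S * Vᵀ) (hU : Uᵀ * U = 1)
    (hV : Vᵀ * V = 1) : Vᵀ * (H * Rᵀ)ᵀ * (H * Rᵀ) * V = Sᵀ * S := by
  rw [hSVD]
  simp only [transpose_mul, transpose_transpose, Matrix.mul_assoc]
  rw [← Matrix.mul_assoc Uᵀ U, hU, Matrix.one_mul, hV, Matrix.mul_one, ← Matrix.mul_assoc, hV,
    Matrix.one_mul]

theorem balancing_mul_inverse (Sh : Matrix n n K) (hSVD : H * Rᵀ = U * S * Vᵀ)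
    (hU : Uᵀ * U = 1) (hV : Vᵀ * V = 1) :
    (Sh * Uᵀ * H) * (Rᵀ * V * Sh) = Sh * S * Sh := by
  calc (Sh * Uᵀ * H) * (Rᵀ * V * Sh) = Sh * (Uᵀ * (H * Rᵀ) * V) * Sh := by
        simp only [Matrix.mul_assoc]
    _ = Sh * S * Sh := by rw [hSVD, transpose_mul_svd_mul_eq hU hV]

theorem balancing_controllability_gramian (Sh : Matrix n n K) (hSVD : H * Rᵀ = U * S * Vᵀ)
    (hU : Uᵀ * U = 1) (hV : Vᵀ * V = 1) :
    (Sh * Uᵀ * H) * (Rᵀ * R) * (Sh * Uᵀ * H)ᵀ = Sh * (S * Sᵀ) * Shᵀ := by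
  calc (Sh * Uᵀ * H) * (Rᵀ * R) * (Sh * Uᵀ * H)ᵀ
        = Sh * (Uᵀ * (H * Rᵀ) * (H * Rᵀ)ᵀ * U) * Shᵀ := by
          simp only [transpose_mul, transpose_transpose, Matrix.mul_assoc]
    _ = Sh * (S * Sᵀ) * Shᵀ := by rw [mul_mul_transpose_of_svd hSVD hU hV]

theorem balancing_observability_gramian (Sh : Matrix n n K) (hSVD : H * Rᵀ = U * S * Vᵀ)
    (hU : Uᵀ * U = 1) (hV : Vᵀ * V = 1) :
    (Rᵀ * V * Sh)ᵀ * (Hᵀ * H) * (Rᵀ * V * Sh) = Shᵀ * (Sᵀ * S) * Sh := by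
  calc (Rᵀ * V * Sh)ᵀ * (Hᵀ * H) * (Rᵀ * V * Sh)
        = Shᵀ * (Vᵀ * (H * Rᵀ)ᵀ * (H * Rᵀ) * V) * Sh := by
          simp only [transpose_mul, transpose_transpose, Matrix.mul_assoc]
    _ = Shᵀ * (Sᵀ * S) * Sh := by rw [transpose_mul_mul_of_svd hSVD hU hV]

end SVD

end Matrix

theorem stmt_16_general (n : ℕ)
    (X Y R H U V S Sh : Matrix (Fin n) (Fin n) ℝ)
    (hXR : X = Rᵀ * R) (hYH : Y = Hᵀ * H)
    (hU : U ∈ Matrix.orthogonalGroup (Fin n) ℝ)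
    (hV : V ∈ Matrix.orthogonalGroup (Fin n) ℝ)
    (hS : S.PosDef)
    (hSVD : H * Rᵀ = U * S * Vᵀ)
    -- Sh is Σ^{-1/2}: the positive definite diagonal square root of Σ⁻¹
    (hSh : Sh.PosDef) (hShsq : Sh * Sh = S⁻¹) :
    (Sh * Uᵀ * H) * (Rᵀ * V * Sh) = 1 ∧ (Rᵀ * V * Sh) * (Sh * Uᵀ * H) = 1 ∧
      (Sh * Uᵀ * H) * X * (Sh * Uᵀ * H)ᵀ = S ∧
      (Rᵀ * V * Sh)ᵀ * Y * (Rᵀ * V * Sh) = S := by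
  rw [mem_orthogonalGroup_iff'] at hU hV
  have hSdet : IsUnit S.det := (isUnit_iff_isUnit_det S).mp hS.isUnit
  have hSt : Sᵀ = S := isHermitian_iff_isSymm.mp hS.isHermitian
  have hSht : Shᵀ = Sh := isHermitian_iff_isSymm.mp hSh.isHermitian
  have hTTinv : (Sh * Uᵀ * H) * (Rᵀ * V * Sh) = 1 := by
    rw [balancing_mul_inverse Sh hSVD hU hV, mul_mul_eq_one_of_mul_self_eq_inv hSdet hShsq]
  refine ⟨hTTinv, mul_eq_one_comm.mp hTTinv, ?_, ?_⟩
  · rw [hXR, balancing_controllability_gramian Sh hSVD hU hV, hSt, hSht,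
      mul_mul_mul_eq_of_mul_self_eq_inv hSdet hShsq]
  · rw [hYH, balancing_observability_gramian Sh hSVD hU hV, hSt, hSht,
      mul_mul_mul_eq_of_mul_self_eq_inv hSdet hShsq]

theorem stmt_16 (n : ℕ)
    (X Y R H U V S Sh : Matrix (Fin n) (Fin n) ℝ)
    (hX : X.PosDef) (hY : Y.PosDef)
    (hXR : X = Rᵀ * R) (hYH : Y = Hᵀ * H)
    (hR : IsUnit R.det) (hH : IsUnit H.det)
    (hU : U ∈ Matrix.orthogonalGroup (Fin n) ℝ)
    (hV : V ∈ Matrix.orthogonalGroup (Fin n) ℝ)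
    (hS : S.PosDef) (hSdiag : S.IsDiag)
    (hSVD : H * Rᵀ = U * S * Vᵀ)
    -- Sh is Σ^{-1/2}: the positive definite diagonal square root of Σ⁻¹
    (hSh : Sh.PosDef) (hShdiag : Sh.IsDiag) (hShsq : Sh * Sh = S⁻¹) :
    (Sh * Uᵀ * H) * (Rᵀ * V * Sh) = 1 ∧ (Rᵀ * V * Sh) * (Sh * Uᵀ * H) = 1 ∧
      (Sh * Uᵀ * H) * X * (Sh * Uᵀ * H)ᵀ = S ∧
      (Rᵀ * V * Sh)ᵀ * Y * (Rᵀ * V * Sh) = S :=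
  stmt_16_general n X Y R H U V S Sh hXR hYH hU hV hS hSVD hSh hShsq
end

section
/- Let X, Y be n×n real symmetric positive definite matrices and let T be an invertible n×n matrix with T X Tᵀ = T⁻ᵀ Y T⁻¹ = Σ for a diagonal matrix Σ. Then Σ is positive definite and Σ² is similar to X Y; in particular the diagonal entries of Σ are the positive square roots of the eigenvalues of X Y. -/
/-!
S is congruent to X, hence positive definite, and
S * S = (T X Tᵀ)(T⁻ᵀ Y T⁻¹) = T (X Y) T⁻¹, so X Y is similar to the diagonal matrix S², whose
spectrum consists of its diagonal entries.
-/

open Matrix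

namespace Matrix

variable {n R : Type*} [Fintype n] [DecidableEq n]

theorem PosDef.mul_mul_transpose_of_isUnit_det [CommRing R] [PartialOrder R] [StarRing R]
    [TrivialStar R] {X T : Matrix n n R} (hX : X.PosDef) (hT : IsUnit T.det) :
    (T * X * Tᵀ).PosDef := by
  simpa only [conjTranspose_eq_transpose_of_trivial] using
    hX.mul_mul_conjTranspose_same (vecMul_injective_of_isUnit ((isUnit_iff_isUnit_det T).mpr hT))

theorem mul_mul_transpose_mul_inv_transpose_mul_mul_inv [CommRing R] {X Y T : Matrix n n R}
    (hT : IsUnit T.det) : T * X * Tᵀ * ((T⁻¹)ᵀ * Y * T⁻¹) = T * (X * Y) * T⁻¹ := by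
  have hTt : Tᵀ * (T⁻¹)ᵀ = 1 := by rw [← transpose_mul, nonsing_inv_mul T hT, transpose_one]
  calc T * X * Tᵀ * ((T⁻¹)ᵀ * Y * T⁻¹) = T * X * (Tᵀ * (T⁻¹)ᵀ) * Y * T⁻¹ := by
        simp only [Matrix.mul_assoc]
    _ = T * (X * Y) * T⁻¹ := by rw [hTt, Matrix.mul_one, Matrix.mul_assoc T X]

theorem spectrum_mul_mul_nonsing_inv [CommRing R] {A T : Matrix n n R} (hT : IsUnit T.det) :
    spectrum R (T * A * T⁻¹) = spectrum R A :=
  spectrum.units_conjugate (u := nonsingInvUnit T hT)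

theorem IsDiag.spectrum_mul_self [Field R] {D : Matrix n n R} (hD : D.IsDiag) :
    spectrum R (D * D) = Set.range fun i => D i i ^ 2 := by
  rw [← hD.diagonal_diag, diagonal_mul_diagonal, spectrum_diagonal]
  simp only [diag_apply, diagonal_apply_eq, sq]

end Matrix

theorem stmt_17_general (n : ℕ) (X Y T S : Matrix (Fin n) (Fin n) ℝ)
    (hX : X.PosDef) (hT : IsUnit T.det) (hSdiag : S.IsDiag)
    (h₁ : T * X * Tᵀ = S) (h₂ : (T⁻¹)ᵀ * Y * T⁻¹ = S) :
    S.PosDef ∧ (∃ P : Matrix (Fin n) (Fin n) ℝ, IsUnit P.det ∧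
      S * S = P * (X * Y) * P⁻¹) ∧
    ∀ i : Fin n, 0 < S i i ∧ (S i i) ^ 2 ∈ spectrum ℝ (X * Y) := by
  have hS : S.PosDef := h₁ ▸ hX.mul_mul_transpose_of_isUnit_det hT
  have hsim : S * S = T * (X * Y) * T⁻¹ := by
    rw [← mul_mul_transpose_mul_inv_transpose_mul_mul_inv hT, h₁, h₂]
  refine ⟨hS, ⟨T, hT, hsim⟩, fun i => ⟨hS.diag_pos, ?_⟩⟩
  rw [← spectrum_mul_mul_nonsing_inv hT, ← hsim, hSdiag.spectrum_mul_self]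
  exact ⟨i, rfl⟩

theorem stmt_17 (n : ℕ) (X Y T S : Matrix (Fin n) (Fin n) ℝ)
    (hX : X.PosDef) (hY : Y.PosDef) (hT : IsUnit T.det) (hSdiag : S.IsDiag)
    (h₁ : T * X * Tᵀ = S) (h₂ : (T⁻¹)ᵀ * Y * T⁻¹ = S) :
    S.PosDef ∧ (∃ P : Matrix (Fin n) (Fin n) ℝ, IsUnit P.det ∧
      S * S = P * (X * Y) * P⁻¹) ∧
    ∀ i : Fin n, 0 < S i i ∧ (S i i) ^ 2 ∈ spectrum ℝ (X * Y) :=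
  stmt_17_general n X Y T S hX hT hSdiag h₁ h₂
end
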